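/- Let 𝒳 ⊂ ℝ^{n_x} be a hyperrectangle of positive Lebesgue measure, q₀ a continuous probability density on 𝒳, q a continuous Markov kernel density on 𝒳 × 𝒳, K ∈ ℕ a horizon, and T the induced trajectory density on 𝒮 = 𝒳^{K+1}. Let (𝒳_i)_{i∈X} be a finite hyperrectangular partition of 𝒳 (|X| = N) with initial weights π, polytopes ℙ_i, and per-step functional Φ as defined. Let p be the discretization of T over the induced trajectory partition, i.e., p(i_0, …, i_K) = ∫_{𝒳_{i_0} × ⋯ × 𝒳_{i_K}} T(s) ds. Define the recursions V̲_K(i) = V̄_K(i) = 0 and, for k = K−1, …, 0, V̲_k(i) = min_{p′∈ℙ_i} Φ(p′, V̲_{k+1}) and V̄_k(i) = max_{p′∈ℙ_i} Φ(p′, V̄_{k+1}). Then Φ(π, V̲_0) ≤ KL_D(p‖pᵘ) ≤ Φ(π, V̄_0), where KL_D(p‖pᵘ) = Σ_{(i_0,…,i_K)∈X^{K+1}} p(i_0,…,i_K) log(p(i_0,…,i_K) λ(𝒳)^{K+1} / ∏_{k=0}^{K} λ(𝒳_{i_k})). -/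

import Mathlib

open MeasureTheory Real Finset

noncomputable section

/-!
Write `P_k(i₀, …, i_k)` for the integral of the density of `(x₀, …, x_k)` over the box
`𝒳_{i₀} × ⋯ × 𝒳_{i_k}`, so that `P_K = p` and `P_0 = π`. Integrating out the last state
(Fubini), `P_{k+1}(i₀, …, i_k, ·)` is the `P_k`-weighted average over the box of the cell
transition vectors `(∫_{𝒳_j} q(x_k, ·))_j` with `x_k ∈ 𝒳_{i_k}`, so it sums to `P_k(i₀, …, i_k)`
and, normalised, lies in `ℙ_{i_k}`. The chain rule for the logarithm turns
`Σ P_{k+1} (log(P_{k+1} λ(𝒳)^{k+2} / ∏ λ(𝒳_{i_m})) + V(i_{k+1}))` into the same expression at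
level `k` with `V` replaced by `Φ(conditional, V)`. As `V̲_k ≤ Φ(·, V̲_{k+1})` and
`Φ(·, V̄_{k+1}) ≤ V̄_k` on each `ℙ_i`, the expression with `V̲` increases and the one with `V̄`
decreases from `k = 0`, where it is `Φ(π, V_0)`, to `k = K`, where `V_K = 0` leaves `KL_D(p‖pᵘ)`.
-/

theorem Fintype.sum_fin_succ_pi_snoc {β M : Type*} [Fintype β] [AddCommMonoid M] {n : ℕ}
    (f : (Fin (n + 1) → β) → M) :
    ∑ t, f t = ∑ t : Fin n → β, ∑ j, f (Fin.snoc t j) := by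
  rw [← (Fin.snocEquiv fun _ => β).sum_comp, Fintype.sum_prod_type, Finset.sum_comm]
  rfl

theorem continuous_mul_log_mul_const (c : ℝ) : Continuous fun x : ℝ => x * log (x * c) := by
  rcases eq_or_ne c 0 with rfl | hc
  · simpa using continuous_const (y := (0 : ℝ))
  · have : (fun x : ℝ => x * log (x * c)) = fun x => c⁻¹ * (x * c * log (x * c)) := by
      funext x; field_simp
    rw [this]
    exact continuous_const.mul (continuous_mul_log.comp (continuous_id.mul continuous_const))

section PathCost

variable {ι : Type*} [Fintype ι] (L : ℝ) (w : ι → ℝ)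

/-- `intervalSimplex (P̲ i) (P̄ i)` is `ℙ_i`; with `L = λ(𝒳)` and `w j = λ(𝒳_j)`, `stepCost L w`
is `Φ`, and `pathCost L w K p 0` is `KL_D(p‖pᵘ)`. -/
def intervalSimplex (lo hi : ι → ℝ) : Set (ι → ℝ) :=
  {p | (∀ j, 0 ≤ p j) ∧ ∑ j, p j = 1 ∧ ∀ j, lo j ≤ p j ∧ p j ≤ hi j}

def stepCost (p V : ι → ℝ) : ℝ :=
  (∑ j, p j * log (p j * L / w j)) + ∑ j, p j * V j

def pathCost (k : ℕ) (P : (Fin (k + 1) → ι) → ℝ) (V : ι → ℝ) : ℝ :=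
  ∑ t, P t * (log (P t * L ^ (k + 1) / ∏ m, w (t m)) + V (t (Fin.last k)))

theorem intervalSimplex_subset_Icc (lo hi : ι → ℝ) :
    intervalSimplex lo hi ⊆ Set.Icc lo hi :=
  fun _ hp => ⟨fun j => (hp.2.2 j).1, fun j => (hp.2.2 j).2⟩

theorem div_mem_intervalSimplex {lo hi b : ι → ℝ} {a : ℝ} (ha : 0 < a) (hb : ∀ j, 0 ≤ b j)
    (hsum : ∑ j, b j = a) (hbounds : ∀ j, lo j * a ≤ b j ∧ b j ≤ hi j * a) :
    (fun j => b j / a) ∈ intervalSimplex lo hi := by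
  refine ⟨fun j => div_nonneg (hb j) ha.le, ?_, fun j => ⟨?_, ?_⟩⟩
  · rw [← Finset.sum_div, hsum, div_self ha.ne']
  · rw [le_div_iff₀ ha]; exact (hbounds j).1
  · rw [div_le_iff₀ ha]; exact (hbounds j).2

theorem continuous_stepCost (V : ι → ℝ) : Continuous fun p => stepCost L w p V := by
  unfold stepCost
  simp_rw [mul_div_assoc]
  exact (continuous_finsetSum _ fun j _ =>
    (continuous_mul_log_mul_const _).comp (continuous_apply j)).add (by fun_prop)

theorem sInf_stepCost_le {lo hi : ι → ℝ} (V : ι → ℝ) {c : ι → ℝ}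
    (hc : c ∈ intervalSimplex lo hi) :
    sInf ((fun p => stepCost L w p V) '' intervalSimplex lo hi) ≤ stepCost L w c V :=
  csInf_le (((isCompact_Icc.bddBelow_image (continuous_stepCost L w V).continuousOn).mono
    (Set.image_mono (intervalSimplex_subset_Icc lo hi)))) ⟨c, hc, rfl⟩

theorem stepCost_le_sSup {lo hi : ι → ℝ} (V : ι → ℝ) {c : ι → ℝ}
    (hc : c ∈ intervalSimplex lo hi) :
    stepCost L w c V ≤ sSup ((fun p => stepCost L w p V) '' intervalSimplex lo hi) :=
  le_csSup (((isCompact_Icc.bddAbove_image (continuous_stepCost L w V).continuousOn).mono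
    (Set.image_mono (intervalSimplex_subset_Icc lo hi)))) ⟨c, hc, rfl⟩

theorem mul_log_chain_rule {a b W wj : ℝ} (k : ℕ) (hL : L ≠ 0) (ha : 0 < a) (hW : W ≠ 0)
    (hwj : wj ≠ 0) :
    b * log (b * L ^ (k + 2) / (W * wj)) =
      b * log (a * L ^ (k + 1) / W) + a * (b / a * log (b / a * L / wj)) := by
  rcases eq_or_ne b 0 with rfl | hb
  · simp
  have hsplit : b * L ^ (k + 2) / (W * wj) = a * L ^ (k + 1) / W * (b / a * L / wj) := by
    field_simp; ring
  rw [hsplit, log_mul (by positivity) (by positivity)]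
  field_simp

theorem pathCost_succ {k : ℕ} {P : (Fin (k + 1) → ι) → ℝ} {P' : (Fin (k + 2) → ι) → ℝ}
    (hL : L ≠ 0) (hw : ∀ j, 0 < w j) (hP' : ∀ t, 0 ≤ P' t)
    (hsum : ∀ t, ∑ j, P' (Fin.snoc t j) = P t) (V : ι → ℝ) :
    pathCost L w (k + 1) P' V = ∑ t, P t * (log (P t * L ^ (k + 1) / ∏ m, w (t m)) +
      stepCost L w (fun j => P' (Fin.snoc t j) / P t) V) := by
  rw [pathCost, Fintype.sum_fin_succ_pi_snoc]
  refine Finset.sum_congr rfl fun t _ => ?_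
  have hprod (j : ι) : ∏ m, w ((Fin.snoc t j : Fin (k + 2) → ι) m) = (∏ m, w (t m)) * w j := by
    simp [Fin.prod_univ_castSucc]
  simp only [Fin.snoc_last, hprod]
  rcases (hsum t ▸ Finset.sum_nonneg fun j _ => hP' _ : 0 ≤ P t).eq_or_lt with hPt | hPt
  · have hzero : ∀ j, P' (Fin.snoc t j) = 0 := fun j =>
      (Finset.sum_eq_zero_iff_of_nonneg fun j _ => hP' _).1 (hsum t ▸ hPt.symm) j (mem_univ j)
    simp [← hPt, hzero]
  have hW : ∏ m, w (t m) ≠ 0 := (Finset.prod_pos fun m _ => hw (t m)).ne'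
  simp only [mul_add, Finset.sum_add_distrib, stepCost, mul_log_chain_rule L k hL hPt hW (hw _).ne',
    ← Finset.sum_mul, hsum, Finset.mul_sum]
  have hV (j : ι) : P t * (P' (Fin.snoc t j) / P t * V j) = P' (Fin.snoc t j) * V j := by
    field_simp
  simp only [hV]
  ring

theorem pathCost_succ_sub_pathCost {k : ℕ} {P : (Fin (k + 1) → ι) → ℝ}
    {P' : (Fin (k + 2) → ι) → ℝ} (hL : L ≠ 0) (hw : ∀ j, 0 < w j) (hP' : ∀ t, 0 ≤ P' t)
    (hsum : ∀ t, ∑ j, P' (Fin.snoc t j) = P t) (U V : ι → ℝ) :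
    pathCost L w (k + 1) P' V - pathCost L w k P U =
      ∑ t, P t * (stepCost L w (fun j => P' (Fin.snoc t j) / P t) V - U (t (Fin.last k))) := by
  rw [pathCost_succ L w hL hw hP' hsum, pathCost, ← Finset.sum_sub_distrib]
  exact Finset.sum_congr rfl fun t _ => by ring

theorem pathCost_zero (p₀ V : ι → ℝ) {P : (Fin 1 → ι) → ℝ} (hP : ∀ t, P t = p₀ (t 0)) :
    pathCost L w 0 P V = stepCost L w p₀ V := by
  rw [stepCost, ← Finset.sum_add_distrib, pathCost]
  refine Fintype.sum_equiv (Equiv.funUnique (Fin 1) ι) _ _ fun t => ?_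
  simp only [Equiv.funUnique_apply, Fin.default_eq_zero, Fin.last_zero, hP,
    Fin.prod_univ_succ, Fin.prod_univ_zero, mul_one, zero_add, pow_one]
  ring

section Recursion

variable {P : (k : ℕ) → (Fin (k + 1) → ι) → ℝ} {S : ι → Set (ι → ℝ)} {U : ℕ → ι → ℝ} {K : ℕ}

theorem pathCost_zero_le_pathCost (hL : L ≠ 0) (hw : ∀ j, 0 < w j) (hP : ∀ k t, 0 ≤ P k t)
    (hsum : ∀ k t, ∑ j, P (k + 1) (Fin.snoc t j) = P k t)
    (hcond : ∀ k t, 0 < P k t → (fun j => P (k + 1) (Fin.snoc t j) / P k t) ∈ S (t (Fin.last k)))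
    (hU : ∀ k < K, ∀ i, ∀ c ∈ S i, U k i ≤ stepCost L w c (U (k + 1))) :
    pathCost L w 0 (P 0) (U 0) ≤ pathCost L w K (P K) (U K) := by
  have hstep (k : ℕ) (hk : k < K) :
      pathCost L w k (P k) (U k) ≤ pathCost L w (k + 1) (P (k + 1)) (U (k + 1)) := by
    rw [← sub_nonneg, pathCost_succ_sub_pathCost L w hL hw (hP (k + 1)) (hsum k)]
    refine Finset.sum_nonneg fun t _ => ?_
    rcases (hP k t).eq_or_lt with hPt | hPt
    · simp [← hPt]
    · exact mul_nonneg hPt.le (sub_nonneg.2 (hU k hk _ _ (hcond k t hPt)))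
  exact monotoneOn_of_le_succ (f := fun k => pathCost L w k (P k) (U k)) Set.ordConnected_Iic
    (fun k _ _ hk => hstep k (Order.succ_le_iff.1 hk)) (Set.mem_Iic.2 (Nat.zero_le K))
    (Set.mem_Iic.2 le_rfl) (Nat.zero_le K)

theorem pathCost_le_pathCost_zero (hL : L ≠ 0) (hw : ∀ j, 0 < w j) (hP : ∀ k t, 0 ≤ P k t)
    (hsum : ∀ k t, ∑ j, P (k + 1) (Fin.snoc t j) = P k t)
    (hcond : ∀ k t, 0 < P k t → (fun j => P (k + 1) (Fin.snoc t j) / P k t) ∈ S (t (Fin.last k)))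
    (hU : ∀ k < K, ∀ i, ∀ c ∈ S i, stepCost L w c (U (k + 1)) ≤ U k i) :
    pathCost L w K (P K) (U K) ≤ pathCost L w 0 (P 0) (U 0) := by
  have hstep (k : ℕ) (hk : k < K) :
      pathCost L w (k + 1) (P (k + 1)) (U (k + 1)) ≤ pathCost L w k (P k) (U k) := by
    rw [← sub_nonpos, pathCost_succ_sub_pathCost L w hL hw (hP (k + 1)) (hsum k)]
    refine Finset.sum_nonpos fun t _ => ?_
    rcases (hP k t).eq_or_lt with hPt | hPt
    · simp [← hPt]
    · exact mul_nonpos_of_nonneg_of_nonpos hPt.le (sub_nonpos.2 (hU k hk _ _ (hcond k t hPt)))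
  exact antitoneOn_of_succ_le (f := fun k => pathCost L w k (P k) (U k)) Set.ordConnected_Iic
    (fun k _ _ hk => hstep k (Order.succ_le_iff.1 hk)) (Set.mem_Iic.2 (Nat.zero_le K))
    (Set.mem_Iic.2 le_rfl) (Nat.zero_le K)

end Recursion

end PathCost

section Snoc

variable {α : Type*} {n : ℕ}

theorem preimage_snoc_univ_pi (S : Fin n → Set α) (A : Set α) :
    (fun p : α × (Fin n → α) => (Fin.snoc p.2 p.1 : Fin (n + 1) → α)) ⁻¹'
      Set.univ.pi (Fin.snoc S A) = A ×ˢ Set.univ.pi S := by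
  ext ⟨y, z⟩
  simp only [Set.mem_preimage, Set.mem_univ_pi, Set.mem_prod, Fin.forall_fin_succ',
    Fin.snoc_castSucc, Fin.snoc_last]
  tauto

theorem MeasurableEquiv.coe_piFinSuccAbove_last_symm [MeasurableSpace α] :
    ⇑(MeasurableEquiv.piFinSuccAbove (fun _ : Fin (n + 1) => α) (Fin.last n)).symm =
      fun p => Fin.snoc p.2 p.1 := by
  funext p
  simp only [MeasurableEquiv.piFinSuccAbove_symm_apply, Fin.insertNthEquiv_last]
  rfl

theorem measurableEmbedding_snoc [MeasurableSpace α] :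
    MeasurableEmbedding (fun p : α × (Fin n → α) => (Fin.snoc p.2 p.1 : Fin (n + 1) → α)) :=
  MeasurableEquiv.coe_piFinSuccAbove_last_symm (α := α) (n := n) ▸
    (MeasurableEquiv.piFinSuccAbove (fun _ => α) (Fin.last n)).symm.measurableEmbedding

variable [MeasureSpace α] [SigmaFinite (volume : Measure α)]

theorem measurePreserving_snoc :
    MeasurePreserving (fun p : α × (Fin n → α) => (Fin.snoc p.2 p.1 : Fin (n + 1) → α)) :=
  MeasurableEquiv.coe_piFinSuccAbove_last_symm (α := α) (n := n) ▸
    (volume_preserving_piFinSuccAbove (fun _ => α) (Fin.last n)).symm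

theorem integrableOn_univ_pi_snoc_iff (S : Fin n → Set α) (A : Set α)
    {E : Type*} [NormedAddCommGroup E] {f : (Fin (n + 1) → α) → E} :
    IntegrableOn f (Set.univ.pi (Fin.snoc S A)) ↔ Integrable (fun p => f (Fin.snoc p.2 p.1))
      ((volume.restrict A).prod (volume.restrict (Set.univ.pi S))) := by
  rw [← measurePreserving_snoc.integrableOn_comp_preimage measurableEmbedding_snoc,
    preimage_snoc_univ_pi, IntegrableOn, Measure.volume_eq_prod, Measure.prod_restrict]
  rfl

theorem setIntegral_univ_pi_snoc (S : Fin n → Set α) (A : Set α)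
    {E : Type*} [NormedAddCommGroup E] [NormedSpace ℝ E] {f : (Fin (n + 1) → α) → E}
    (hf : IntegrableOn f (Set.univ.pi (Fin.snoc S A))) :
    ∫ x in Set.univ.pi (Fin.snoc S A), f x = ∫ z in Set.univ.pi S, ∫ y in A, f (Fin.snoc z y) := by
  rw [← measurePreserving_snoc.setIntegral_preimage_emb measurableEmbedding_snoc,
    preimage_snoc_univ_pi, Measure.volume_eq_prod, ← Measure.prod_restrict]
  exact integral_prod_symm _ ((integrableOn_univ_pi_snoc_iff S A).1 hf)

theorem IntegrableOn.setIntegral_snoc {S : Fin n → Set α} {A : Set α}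
    {E : Type*} [NormedAddCommGroup E] [NormedSpace ℝ E] {f : (Fin (n + 1) → α) → E}
    (hf : IntegrableOn f (Set.univ.pi (Fin.snoc S A))) :
    IntegrableOn (fun z => ∫ y in A, f (Fin.snoc z y)) (Set.univ.pi S) :=
  ((integrableOn_univ_pi_snoc_iff S A).1 hf).integral_prod_right

end Snoc

section Averaging

variable {α ι : Type*} [MeasurableSpace α] [Fintype ι] {μ : Measure α} {s : Set α}

theorem setIntegral_mul_mem_Icc {f g : α → ℝ} {lo hi : ℝ} (hs : MeasurableSet s)
    (hf : IntegrableOn f s μ) (hfg : IntegrableOn (fun x => f x * g x) s μ)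
    (hf0 : ∀ x ∈ s, 0 ≤ f x) (hg : ∀ x ∈ s, g x ∈ Set.Icc lo hi) :
    ∫ x in s, f x * g x ∂μ ∈ Set.Icc (lo * ∫ x in s, f x ∂μ) (hi * ∫ x in s, f x ∂μ) := by
  rw [← integral_const_mul, ← integral_const_mul]
  refine ⟨setIntegral_mono_on (hf.const_mul lo) hfg hs fun x hx => ?_,
    setIntegral_mono_on hfg (hf.const_mul hi) hs fun x hx => ?_⟩
  · rw [mul_comm]; exact mul_le_mul_of_nonneg_left (hg x hx).1 (hf0 x hx)
  · rw [mul_comm]; exact mul_le_mul_of_nonneg_right (hg x hx).2 (hf0 x hx)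

theorem sum_setIntegral_mul_eq {f : α → ℝ} {v : α → ι → ℝ} (hs : MeasurableSet s)
    (hfv : ∀ j, IntegrableOn (fun x => f x * v x j) s μ) (hv : ∀ x ∈ s, ∑ j, v x j = 1) :
    ∑ j, ∫ x in s, f x * v x j ∂μ = ∫ x in s, f x ∂μ := by
  rw [← integral_finsetSum _ fun j _ => hfv j]
  refine setIntegral_congr_fun hs fun x hx => ?_
  simp only [← Finset.mul_sum, hv x hx, mul_one]

theorem setIntegral_cells_mem_intervalSimplex {X : ι → Set α} {g : α → ℝ} {lo hi : ι → ℝ}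
    (hX : ∀ i, MeasurableSet (X i)) (hd : Pairwise (Function.onFun (AEDisjoint μ) X))
    (hg0 : ∀ y ∈ ⋃ i, X i, 0 ≤ g y) (hg : IntegrableOn g (⋃ i, X i) μ)
    (h1 : ∫ y in ⋃ i, X i, g y ∂μ = 1) (hb : ∀ j, ∫ y in X j, g y ∂μ ∈ Set.Icc (lo j) (hi j)) :
    (fun j => ∫ y in X j, g y ∂μ) ∈ intervalSimplex lo hi := by
  refine ⟨fun j => setIntegral_nonneg (hX j) fun y hy => hg0 y (Set.mem_iUnion_of_mem j hy),
    ?_, hb⟩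
  rw [← h1, integral_iUnion_ae (fun i => (hX i).nullMeasurableSet) hd hg, tsum_fintype]

end Averaging

section MarkovChain

variable {α ι : Type*} (q₀ : α → ℝ) (q : α → α → ℝ)

def prefixDensity (k : ℕ) (s : Fin (k + 1) → α) : ℝ :=
  q₀ (s 0) * ∏ m : Fin k, q (s m.castSucc) (s m.succ)

theorem prefixDensity_snoc {k : ℕ} (z : Fin (k + 1) → α) (y : α) :
    prefixDensity q₀ q (k + 1) (Fin.snoc z y) = prefixDensity q₀ q k z * q (z (Fin.last k)) y := by
  rw [prefixDensity, prefixDensity, Fin.prod_univ_castSucc]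
  simp only [Fin.succ_castSucc, Fin.snoc_castSucc, Fin.succ_last, Fin.snoc_last,
    Fin.snoc_apply_zero, mul_assoc]

variable {q₀ q} in
theorem prefixDensity_nonneg {X : Set α} (hq₀ : ∀ x ∈ X, 0 ≤ q₀ x)
    (hq : ∀ x ∈ X, ∀ y ∈ X, 0 ≤ q x y) {k : ℕ} {s : Fin (k + 1) → α}
    (hs : s ∈ Set.univ.pi fun _ => X) : 0 ≤ prefixDensity q₀ q k s :=
  mul_nonneg (hq₀ _ (hs 0 trivial))
    (Finset.prod_nonneg fun _ _ => hq _ (hs _ trivial) _ (hs _ trivial))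

variable {q₀ q} in
theorem continuousOn_prefixDensity [TopologicalSpace α] {X : Set α} (hq₀ : ContinuousOn q₀ X)
    (hq : ContinuousOn (fun z : α × α => q z.1 z.2) (X ×ˢ X)) (k : ℕ) :
    ContinuousOn (prefixDensity q₀ q k) (Set.univ.pi fun _ => X) := by
  refine (hq₀.comp (continuous_apply 0).continuousOn fun s hs => Set.mem_univ_pi.1 hs 0).mul
    (continuousOn_finsetProd _ fun m _ =>
      hq.comp (f := fun s : Fin (k + 1) → α => (s m.castSucc, s m.succ))
        ((continuous_apply _).prodMk (continuous_apply _)).continuousOn fun s hs => ?_)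
  exact ⟨Set.mem_univ_pi.1 hs _, Set.mem_univ_pi.1 hs _⟩

variable {q₀ q} in
theorem integrableOn_prefixDensity [TopologicalSpace α] [SecondCountableTopology α]
    [MeasureSpace α] [OpensMeasurableSpace α] [SigmaFinite (volume : Measure α)]
    [IsFiniteMeasureOnCompacts (volume : Measure α)] {X : Set α} (hq₀ : ContinuousOn q₀ X)
    (hq : ContinuousOn (fun z : α × α => q z.1 z.2) (X ×ˢ X)) {k : ℕ} {S : Fin (k + 1) → Set α}
    (hSX : ∀ m, S m ⊆ X) (hS : ∀ m, IsCompact (S m)) (hSm : ∀ m, MeasurableSet (S m)) :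
    IntegrableOn (prefixDensity q₀ q k) (Set.univ.pi S) :=
  ((continuousOn_prefixDensity hq₀ hq k).mono (Set.pi_mono fun m _ => hSX m)).integrableOn_compact'
    (isCompact_univ_pi hS) (MeasurableSet.univ_pi hSm)

variable (Xp : ι → Set α) [MeasureSpace α]

def cellMass (k : ℕ) (t : Fin (k + 1) → ι) : ℝ :=
  ∫ s in Set.univ.pi fun m => Xp (t m), prefixDensity q₀ q k s

theorem cellMass_zero (t : Fin 1 → ι) : cellMass q₀ q Xp 0 t = ∫ x in Xp (t 0), q₀ x := by
  have hbox :
      (Set.univ.pi fun m => Xp (t m)) = MeasurableEquiv.funUnique (Fin 1) α ⁻¹' Xp (t 0) := by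
    ext s
    simp [Fin.forall_fin_one]
  rw [← (volume_preserving_funUnique (Fin 1) α).setIntegral_preimage_emb
    (MeasurableEquiv.funUnique (Fin 1) α).measurableEmbedding, ← hbox, cellMass]
  simp only [prefixDensity, Finset.univ_eq_empty, Finset.prod_empty, mul_one]
  rfl

variable {q₀ q Xp}

theorem cellMass_nonneg (hmeas : ∀ i, MeasurableSet (Xp i)) {k : ℕ} {t : Fin (k + 1) → ι}
    (hD : ∀ s ∈ Set.univ.pi fun m => Xp (t m), 0 ≤ prefixDensity q₀ q k s) :
    0 ≤ cellMass q₀ q Xp k t :=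
  setIntegral_nonneg (MeasurableSet.univ_pi fun _ => hmeas _) hD

variable [SigmaFinite (volume : Measure α)]

theorem cellMass_snoc {k : ℕ} {t : Fin (k + 1) → ι} {j : ι}
    (hint : IntegrableOn (prefixDensity q₀ q (k + 1))
      (Set.univ.pi fun m => Xp ((Fin.snoc t j : Fin (k + 2) → ι) m))) :
    cellMass q₀ q Xp (k + 1) (Fin.snoc t j) = ∫ z in Set.univ.pi fun m => Xp (t m),
      prefixDensity q₀ q k z * ∫ y in Xp j, q (z (Fin.last k)) y := by
  have hbox : (fun m => Xp ((Fin.snoc t j : Fin (k + 2) → ι) m)) =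
      Fin.snoc (fun m => Xp (t m)) (Xp j) := Fin.comp_snoc Xp t j
  rw [hbox] at hint
  rw [cellMass, hbox, setIntegral_univ_pi_snoc _ _ hint]
  simp only [prefixDensity_snoc, integral_const_mul]

theorem integrableOn_prefixDensity_mul {k : ℕ} {t : Fin (k + 1) → ι} {j : ι}
    (hint : IntegrableOn (prefixDensity q₀ q (k + 1))
      (Set.univ.pi fun m => Xp ((Fin.snoc t j : Fin (k + 2) → ι) m))) :
    IntegrableOn (fun z => prefixDensity q₀ q k z * ∫ y in Xp j, q (z (Fin.last k)) y)
      (Set.univ.pi fun m => Xp (t m)) := by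
  have hbox : (fun m => Xp ((Fin.snoc t j : Fin (k + 2) → ι) m)) =
      Fin.snoc (fun m => Xp (t m)) (Xp j) := Fin.comp_snoc Xp t j
  rw [hbox] at hint
  simpa only [prefixDensity_snoc, integral_const_mul] using IntegrableOn.setIntegral_snoc hint

variable [Fintype ι]

theorem sum_cellMass_snoc (hmeas : ∀ i, MeasurableSet (Xp i))
    (hint : ∀ k (t : Fin (k + 1) → ι),
      IntegrableOn (prefixDensity q₀ q k) (Set.univ.pi fun m => Xp (t m)))
    {k : ℕ} {t : Fin (k + 1) → ι}
    (hv : ∀ x ∈ Xp (t (Fin.last k)), ∑ j, ∫ y in Xp j, q x y = 1) :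
    ∑ j, cellMass q₀ q Xp (k + 1) (Fin.snoc t j) = cellMass q₀ q Xp k t := by
  simp only [cellMass_snoc (hint _ _)]
  exact sum_setIntegral_mul_eq (MeasurableSet.univ_pi fun _ => hmeas _)
    (fun _ => integrableOn_prefixDensity_mul (hint _ _)) fun z hz => hv _ (Set.mem_univ_pi.1 hz _)

theorem cellMass_snoc_div_mem_intervalSimplex (hmeas : ∀ i, MeasurableSet (Xp i))
    (hint : ∀ k (t : Fin (k + 1) → ι),
      IntegrableOn (prefixDensity q₀ q k) (Set.univ.pi fun m => Xp (t m)))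
    (hD : ∀ k (t : Fin (k + 1) → ι), ∀ s ∈ Set.univ.pi fun m => Xp (t m),
      0 ≤ prefixDensity q₀ q k s)
    {lo hi : ι → ℝ} {k : ℕ} {t : Fin (k + 1) → ι}
    (htrans : ∀ x ∈ Xp (t (Fin.last k)), (fun j => ∫ y in Xp j, q x y) ∈ intervalSimplex lo hi)
    (hpos : 0 < cellMass q₀ q Xp k t) :
    (fun j => cellMass q₀ q Xp (k + 1) (Fin.snoc t j) / cellMass q₀ q Xp k t) ∈
      intervalSimplex lo hi := by
  refine div_mem_intervalSimplex hpos (fun j => cellMass_nonneg hmeas (hD _ _))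
    (sum_cellMass_snoc hmeas hint fun x hx => (htrans x hx).2.1) fun j => ?_
  rw [cellMass_snoc (hint _ _)]
  exact setIntegral_mul_mem_Icc (MeasurableSet.univ_pi fun _ => hmeas _) (hint k t)
    (integrableOn_prefixDensity_mul (hint _ _)) (hD k t)
    fun z hz => (htrans _ (Set.mem_univ_pi.1 hz _)).2.2 j

theorem pathCost_cellMass_sandwich {L : ℝ} {w : ι → ℝ} (hL : L ≠ 0) (hw : ∀ j, 0 < w j)
    (hmeas : ∀ i, MeasurableSet (Xp i))
    (hint : ∀ k (t : Fin (k + 1) → ι),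
      IntegrableOn (prefixDensity q₀ q k) (Set.univ.pi fun m => Xp (t m)))
    (hD : ∀ k (t : Fin (k + 1) → ι), ∀ s ∈ Set.univ.pi fun m => Xp (t m),
      0 ≤ prefixDensity q₀ q k s)
    {lo hi : ι → ι → ℝ}
    (htrans : ∀ i, ∀ x ∈ Xp i, (fun j => ∫ y in Xp j, q x y) ∈ intervalSimplex (lo i) (hi i))
    {K : ℕ} {Vlow Vup : ℕ → ι → ℝ}
    (hVlow : ∀ k < K, ∀ i,
      Vlow k i = sInf ((fun c => stepCost L w c (Vlow (k + 1))) '' intervalSimplex (lo i) (hi i)))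
    (hVup : ∀ k < K, ∀ i,
      Vup k i = sSup ((fun c => stepCost L w c (Vup (k + 1))) '' intervalSimplex (lo i) (hi i))) :
    pathCost L w 0 (cellMass q₀ q Xp 0) (Vlow 0) ≤ pathCost L w K (cellMass q₀ q Xp K) (Vlow K) ∧
      pathCost L w K (cellMass q₀ q Xp K) (Vup K) ≤
        pathCost L w 0 (cellMass q₀ q Xp 0) (Vup 0) := by
  have hnonneg (k : ℕ) (t : Fin (k + 1) → ι) : 0 ≤ cellMass q₀ q Xp k t :=
    cellMass_nonneg hmeas (hD k t)
  have hsum (k : ℕ) (t : Fin (k + 1) → ι) :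
      ∑ j, cellMass q₀ q Xp (k + 1) (Fin.snoc t j) = cellMass q₀ q Xp k t :=
    sum_cellMass_snoc hmeas hint fun x hx => (htrans _ x hx).2.1
  have hcond (k : ℕ) (t : Fin (k + 1) → ι) (hpos : 0 < cellMass q₀ q Xp k t) :=
    cellMass_snoc_div_mem_intervalSimplex hmeas hint hD (htrans (t (Fin.last k))) hpos
  exact ⟨pathCost_zero_le_pathCost L w hL hw hnonneg hsum hcond
      fun k hk i c hc => hVlow k hk i ▸ sInf_stepCost_le L w _ hc,
    pathCost_le_pathCost_zero L w hL hw hnonneg hsum hcond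
      fun k hk i c hc => hVup k hk i ▸ stepCost_le_sSup L w _ hc⟩

end MarkovChain

theorem imc_abstraction_sandwich_bounds_general
    (nx N K : ℕ)
    (𝒳 : Set (Fin nx → ℝ))
    (h𝒳vol : 0 < volume 𝒳)
    (q0 : (Fin nx → ℝ) → ℝ) (q : (Fin nx → ℝ) → (Fin nx → ℝ) → ℝ)
    (hq0cont : ContinuousOn q0 𝒳)
    (hq0nonneg : ∀ x ∈ 𝒳, 0 ≤ q0 x)
    (hqcont : ContinuousOn (fun z : (Fin nx → ℝ) × (Fin nx → ℝ) => q z.1 z.2) (𝒳 ×ˢ 𝒳))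
    (hqnonneg : ∀ x ∈ 𝒳, ∀ x' ∈ 𝒳, 0 ≤ q x x')
    (hqint : ∀ x ∈ 𝒳, (∫ x' in 𝒳, q x x') = 1)
    -- hyperrectangular partition of 𝒳
    (Xp : Fin N → Set (Fin nx → ℝ))
    (hXrect : ∀ i, ∃ α β : Fin nx → ℝ, Xp i = Set.Icc α β)
    (hXpos : ∀ i, 0 < volume (Xp i))
    (hXcover : (⋃ i, Xp i) = 𝒳)
    (hXdisj : ∀ i j, i ≠ j → volume (Xp i ∩ Xp j) = 0)
    -- abstraction data
    (pi0 : Fin N → ℝ) (hpi0 : ∀ i, pi0 i = ∫ x in Xp i, q0 x)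
    (Pup Plow : Fin N → Fin N → ℝ)
    (hPup : ∀ i j, IsGreatest ((fun x => ∫ x' in Xp j, q x x') '' Xp i) (Pup i j))
    (hPlow : ∀ i j, IsLeast ((fun x => ∫ x' in Xp j, q x x') '' Xp i) (Plow i j))
    (ℙ : Fin N → Set (Fin N → ℝ))
    (hℙ : ∀ i, ℙ i = {p' : Fin N → ℝ |
        (∀ j, 0 ≤ p' j) ∧ (∑ j, p' j) = 1 ∧ ∀ j, Plow i j ≤ p' j ∧ p' j ≤ Pup i j})
    (Φ : (Fin N → ℝ) → (Fin N → ℝ) → ℝ)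
    (hΦ : ∀ p' V, Φ p' V =
        (∑ j, p' j * Real.log (p' j * (volume 𝒳).toReal / (volume (Xp j)).toReal))
        + ∑ j, p' j * V j)
    -- backward value recursions (minimization and maximization)
    (Vlow Vup : ℕ → Fin N → ℝ)
    (hVlowK : ∀ i, Vlow K i = 0) (hVupK : ∀ i, Vup K i = 0)
    (hVlowrec : ∀ k, k < K → ∀ i, Vlow k i = sInf ((fun p' => Φ p' (Vlow (k + 1))) '' ℙ i))
    (hVuprec : ∀ k, k < K → ∀ i, Vup k i = sSup ((fun p' => Φ p' (Vup (k + 1))) '' ℙ i))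
    -- trajectory density and the discretization of its law over the induced partition
    (T : (Fin (K + 1) → Fin nx → ℝ) → ℝ)
    (hT : ∀ s, T s = q0 (s 0) * ∏ k : Fin K, q (s k.castSucc) (s k.succ))
    (p : (Fin (K + 1) → Fin N) → ℝ)
    (hp : ∀ t, p t = ∫ s in (Set.univ.pi fun k => Xp (t k)), T s) :
    Φ pi0 (Vlow 0)
      ≤ (∑ t : Fin (K + 1) → Fin N, p t *
            Real.log (p t * (volume 𝒳).toReal ^ (K + 1) / ∏ k, (volume (Xp (t k))).toReal))
    ∧ (∑ t : Fin (K + 1) → Fin N, p t *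
            Real.log (p t * (volume 𝒳).toReal ^ (K + 1) / ∏ k, (volume (Xp (t k))).toReal))
      ≤ Φ pi0 (Vup 0) := by
  subst hXcover
  obtain rfl : Φ = stepCost (volume (⋃ i, Xp i)).toReal fun j => (volume (Xp j)).toReal :=
    funext₂ hΦ
  obtain rfl : ℙ = fun i => intervalSimplex (Plow i) (Pup i) := funext hℙ
  have hmeas (i : Fin N) : MeasurableSet (Xp i) := by
    obtain ⟨α, β, h⟩ := hXrect i; exact h ▸ measurableSet_Icc
  have hcomp (i : Fin N) : IsCompact (Xp i) := by
    obtain ⟨α, β, h⟩ := hXrect i; exact h ▸ isCompact_Icc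
  have htrans (i : Fin N) (x : Fin nx → ℝ) (hx : x ∈ Xp i) :
      (fun j => ∫ y in Xp j, q x y) ∈ intervalSimplex (Plow i) (Pup i) := by
    have hx' := Set.mem_iUnion_of_mem i hx
    exact setIntegral_cells_mem_intervalSimplex hmeas hXdisj (hqnonneg x hx')
      ((hqcont.comp (continuousOn_const.prodMk continuousOn_id) fun y hy => ⟨hx', hy⟩
        ).integrableOn_compact' (isCompact_iUnion hcomp) (MeasurableSet.iUnion hmeas))
      (hqint x hx') fun j => ⟨(hPlow i j).2 ⟨x, hx, rfl⟩, (hPup i j).2 ⟨x, hx, rfl⟩⟩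
  obtain ⟨hlow, hup⟩ := pathCost_cellMass_sandwich
    (ENNReal.toReal_pos h𝒳vol.ne' (isCompact_iUnion hcomp).measure_lt_top.ne).ne'
    (fun j => ENNReal.toReal_pos (hXpos j).ne' (hcomp j).measure_lt_top.ne) hmeas
    (fun k t => integrableOn_prefixDensity hq0cont hqcont (fun m => Set.subset_iUnion Xp (t m))
      (fun _ => hcomp _) fun _ => hmeas _)
    (fun k t s hs => prefixDensity_nonneg hq0nonneg hqnonneg
      (Set.pi_mono (fun m _ => Set.subset_iUnion Xp (t m)) hs))
    htrans hVlowrec hVuprec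
  have hP0 (t : Fin 1 → Fin N) : cellMass q0 q Xp 0 t = pi0 (t 0) :=
    (cellMass_zero q0 q Xp t).trans (hpi0 _).symm
  have hPK : p = cellMass q0 q Xp K := funext fun t => by
    rw [hp, cellMass]; simp only [hT]; rfl
  rw [pathCost_zero _ _ _ _ hP0] at hlow hup
  simp only [pathCost, hVlowK, hVupK, add_zero, ← hPK] at hlow hup
  exact ⟨hlow, hup⟩

/-- IMC abstraction sandwich bound on the discrete KL divergence to uniform
of the discretized trajectory distribution: `Φ(π, V̲₀) ≤ KL_D(p‖pᵘ) ≤ Φ(π, V̄₀)`. -/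
theorem imc_abstraction_sandwich_bounds
    (nx N K : ℕ)
    (a b : Fin nx → ℝ)
    (𝒳 : Set (Fin nx → ℝ)) (h𝒳 : 𝒳 = Set.Icc a b)
    (h𝒳vol : 0 < volume 𝒳)
    (q0 : (Fin nx → ℝ) → ℝ) (q : (Fin nx → ℝ) → (Fin nx → ℝ) → ℝ)
    (hq0cont : ContinuousOn q0 𝒳)
    (hq0nonneg : ∀ x ∈ 𝒳, 0 ≤ q0 x)
    (hq0int : (∫ x in 𝒳, q0 x) = 1)
    (hqcont : ContinuousOn (fun z : (Fin nx → ℝ) × (Fin nx → ℝ) => q z.1 z.2) (𝒳 ×ˢ 𝒳))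
    (hqnonneg : ∀ x ∈ 𝒳, ∀ x' ∈ 𝒳, 0 ≤ q x x')
    (hqint : ∀ x ∈ 𝒳, (∫ x' in 𝒳, q x x') = 1)
    -- hyperrectangular partition of 𝒳
    (Xp : Fin N → Set (Fin nx → ℝ))
    (hXrect : ∀ i, ∃ α β : Fin nx → ℝ, Xp i = Set.Icc α β)
    (hXpos : ∀ i, 0 < volume (Xp i))
    (hXcover : (⋃ i, Xp i) = 𝒳)
    (hXdisj : ∀ i j, i ≠ j → volume (Xp i ∩ Xp j) = 0)
    -- abstraction data
    (pi0 : Fin N → ℝ) (hpi0 : ∀ i, pi0 i = ∫ x in Xp i, q0 x)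
    (Pup Plow : Fin N → Fin N → ℝ)
    (hPup : ∀ i j, IsGreatest ((fun x => ∫ x' in Xp j, q x x') '' Xp i) (Pup i j))
    (hPlow : ∀ i j, IsLeast ((fun x => ∫ x' in Xp j, q x x') '' Xp i) (Plow i j))
    (ℙ : Fin N → Set (Fin N → ℝ))
    (hℙ : ∀ i, ℙ i = {p' : Fin N → ℝ |
        (∀ j, 0 ≤ p' j) ∧ (∑ j, p' j) = 1 ∧ ∀ j, Plow i j ≤ p' j ∧ p' j ≤ Pup i j})
    (Φ : (Fin N → ℝ) → (Fin N → ℝ) → ℝ)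
    (hΦ : ∀ p' V, Φ p' V =
        (∑ j, p' j * Real.log (p' j * (volume 𝒳).toReal / (volume (Xp j)).toReal))
        + ∑ j, p' j * V j)
    -- backward value recursions (minimization and maximization)
    (Vlow Vup : ℕ → Fin N → ℝ)
    (hVlowK : ∀ i, Vlow K i = 0) (hVupK : ∀ i, Vup K i = 0)
    (hVlowrec : ∀ k, k < K → ∀ i, Vlow k i = sInf ((fun p' => Φ p' (Vlow (k + 1))) '' ℙ i))
    (hVuprec : ∀ k, k < K → ∀ i, Vup k i = sSup ((fun p' => Φ p' (Vup (k + 1))) '' ℙ i))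
    -- trajectory density and the discretization of its law over the induced partition
    (T : (Fin (K + 1) → Fin nx → ℝ) → ℝ)
    (hT : ∀ s, T s = q0 (s 0) * ∏ k : Fin K, q (s k.castSucc) (s k.succ))
    (p : (Fin (K + 1) → Fin N) → ℝ)
    (hp : ∀ t, p t = ∫ s in (Set.univ.pi fun k => Xp (t k)), T s) :
    Φ pi0 (Vlow 0)
      ≤ (∑ t : Fin (K + 1) → Fin N, p t *
            Real.log (p t * (volume 𝒳).toReal ^ (K + 1) / ∏ k, (volume (Xp (t k))).toReal))
    ∧ (∑ t : Fin (K + 1) → Fin N, p t *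
            Real.log (p t * (volume 𝒳).toReal ^ (K + 1) / ∏ k, (volume (Xp (t k))).toReal))
      ≤ Φ pi0 (Vup 0) :=
  imc_abstraction_sandwich_bounds_general nx N K 𝒳 h𝒳vol q0 q hq0cont hq0nonneg hqcont hqnonneg
    hqint Xp hXrect hXpos hXcover hXdisj pi0 hpi0 Pup Plow hPup hPlow ℙ hℙ Φ hΦ Vlow Vup hVlowK
    hVupK hVlowrec hVuprec T hT p hp
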